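/- Let n ≥ 2, and let φ, A : [0, T) → ℝ be continuously differentiable with φ(t) > 0, A(t) ≥ 0, φ'(t) = A(t), and A'(t) ≤ ((n-1)/n)·A(t)²/φ(t) + n·φ(t) for all t (the case K = -1). Then ψ(t) := φ(t)^{1/n} satisfies ψ''(t) ≤ ψ(t), hence φ(t)^{1/n} ≤ φ(0)^{1/n}·cosh(t) + (1/n)·φ(0)^{1/n - 1}·A(0)·sinh(t) for all t ∈ [0, T). -/

import Mathlib

/-!
Put `ψ = φ ^ (1/n)`. The chain rule and the hypothesis on `A'` give `ψ'' ≤ ψ`; the terms in `A²/φ`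
cancel exactly because the exponent is `1/n`. For `w = ψ - g`, where `g` is the solution of
`g'' = g` with the same initial data, we get `w'' ≤ w` and `w(0) = w'(0) = 0`. Factoring
`w'' - w = (d/dt - 1)(d/dt + 1) w`, the integrating factors `e^{-t}` and `e^{t}` give first
`w' + w ≤ 0` and then `w ≤ 0`.
-/

open Real Set

section Comparison

variable {f f' : ℝ → ℝ} {a b : ℝ}

theorem nonpos_of_hasDerivWithinAt_le_mul_self {c : ℝ} (ha : f a ≤ 0)
    (hf : ∀ t ∈ Ico a b, HasDerivWithinAt f (f' t) (Ico a b) t)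
    (hle : ∀ t ∈ Ico a b, f' t ≤ c * f t) {t : ℝ} (ht : t ∈ Ico a b) : f t ≤ 0 := by
  have hg : ∀ s ∈ Ico a b, HasDerivWithinAt (fun s => exp (-c * s) * f s)
      (exp (-c * s) * (f' s - c * f s)) (Ico a b) s := fun s hs =>
    ((((hasDerivAt_id s).const_mul (-c)).exp.hasDerivWithinAt).mul (hf s hs)).congr_deriv
      (by simp only [id_eq]; ring)
  have hanti : AntitoneOn (fun s => exp (-c * s) * f s) (Ico a b) :=
    antitoneOn_of_hasDerivWithinAt_nonpos (convex_Ico a b)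
      (fun s hs => (hg s hs).continuousWithinAt)
      (fun s hs => (hg s (interior_subset hs)).mono interior_subset)
      (fun s hs => mul_nonpos_of_nonneg_of_nonpos (exp_pos _).le
        (sub_nonpos.2 (hle s (interior_subset hs))))
  have hgt : exp (-c * t) * f t ≤ 0 :=
    (hanti ⟨le_rfl, ht.1.trans_lt ht.2⟩ ht ht.1).trans
      (mul_nonpos_of_nonneg_of_nonpos (exp_pos _).le ha)
  exact nonpos_of_mul_nonpos_right hgt (exp_pos _)

theorem le_cosh_sinh_of_hasDerivWithinAt_le_self {f'' : ℝ → ℝ}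
    (hf : ∀ t ∈ Ico a b, HasDerivWithinAt f (f' t) (Ico a b) t)
    (hf' : ∀ t ∈ Ico a b, HasDerivWithinAt f' (f'' t) (Ico a b) t)
    (hle : ∀ t ∈ Ico a b, f'' t ≤ f t) {t : ℝ} (ht : t ∈ Ico a b) :
    f t ≤ f a * cosh (t - a) + f' a * sinh (t - a) := by
  set g : ℝ → ℝ := fun s => f a * cosh (s - a) + f' a * sinh (s - a)
  set g' : ℝ → ℝ := fun s => f a * sinh (s - a) + f' a * cosh (s - a)
  have hg : ∀ s, HasDerivAt g (g' s) s := fun s =>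
    ((((hasDerivAt_id s).sub_const a).cosh.const_mul (f a)).add
      (((hasDerivAt_id s).sub_const a).sinh.const_mul (f' a))).congr_deriv (by simp [g'])
  have hg' : ∀ s, HasDerivAt g' (g s) s := fun s =>
    ((((hasDerivAt_id s).sub_const a).sinh.const_mul (f a)).add
      (((hasDerivAt_id s).sub_const a).cosh.const_mul (f' a))).congr_deriv (by simp [g])
  have hw : ∀ s ∈ Ico a b, HasDerivWithinAt (fun s => f s - g s) (f' s - g' s) (Ico a b) s :=
    fun s hs => (hf s hs).sub (hg s).hasDerivWithinAt
  have hw' : ∀ s ∈ Ico a b, HasDerivWithinAt (fun s => f' s - g' s) (f'' s - g s) (Ico a b) s :=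
    fun s hs => (hf' s hs).sub (hg' s).hasDerivWithinAt
  have hsum : ∀ s ∈ Ico a b, f' s - g' s + (f s - g s) ≤ 0 :=
    fun s hs => nonpos_of_hasDerivWithinAt_le_mul_self (c := 1)
      (f := fun s => f' s - g' s + (f s - g s)) (by simp [g, g'])
      (fun s hs => (hw' s hs).add (hw s hs)) (fun s hs => by linarith [hle s hs]) hs
  have hdiff : f t - g t ≤ 0 :=
    nonpos_of_hasDerivWithinAt_le_mul_self (c := -1) (by simp [g]) hw
      (fun s hs => by linarith [hsum s hs]) ht
  linarith

end Comparison

theorem derivWithin_derivWithin_of_hasDerivWithinAt {𝕜 F : Type*} [NontriviallyNormedField 𝕜]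
    [NormedAddCommGroup F] [NormedSpace 𝕜 F] {f f' f'' : 𝕜 → F} {s : Set 𝕜}
    (hs : UniqueDiffOn 𝕜 s) (hf : ∀ x ∈ s, HasDerivWithinAt f (f' x) s x)
    (hf' : ∀ x ∈ s, HasDerivWithinAt f' (f'' x) s x) {x : 𝕜} (hx : x ∈ s) :
    derivWithin (derivWithin f s) s x = f'' x := by
  have heq : EqOn (derivWithin f s) f' s := fun y hy => (hf y hy).derivWithin (hs y hy)
  rw [derivWithin_congr heq (heq hx)]
  exact (hf' x hx).derivWithin (hs x hx)

/-- With `x = φ`, `y = φ'`, `z = φ''`, the left side is `(φ ^ (1/n))''` as the chain and product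
rules produce it. -/
theorem rpow_inv_second_deriv_le {n x y z : ℝ} (hn : 0 < n) (hx : 0 < x)
    (hz : z ≤ (n - 1) / n * y ^ 2 / x + n * x) :
    z * (1 / n) * x ^ (1 / n - 1) + y * (1 / n) * (y * (1 / n - 1) * x ^ (1 / n - 1 - 1))
      ≤ x ^ (1 / n) := by
  have hq : 0 ≤ x ^ (1 / n - 1) := rpow_nonneg hx.le _
  have hpred : x ^ (1 / n - 1 - 1) = x ^ (1 / n - 1) / x := by
    rw [rpow_sub hx, rpow_one]
  have hsucc : x ^ (1 / n) = x ^ (1 / n - 1) * x := by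
    rw [← rpow_add_one hx.ne', sub_add_cancel]
  calc z * (1 / n) * x ^ (1 / n - 1) + y * (1 / n) * (y * (1 / n - 1) * x ^ (1 / n - 1 - 1))
      = 1 / n * x ^ (1 / n - 1) * (z + (1 / n - 1) * y ^ 2 / x) := by rw [hpred]; ring
    _ ≤ 1 / n * x ^ (1 / n - 1) *
          ((n - 1) / n * y ^ 2 / x + n * x + (1 / n - 1) * y ^ 2 / x) := by gcongr
    _ = x ^ (1 / n) := by rw [hsucc]; field_simp; ring

theorem isoperimetric_type_hyperbolic_general (n : ℕ) (hn : 2 ≤ n) (T : ℝ)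
    (φ A A' : ℝ → ℝ)
    (hφpos : ∀ t ∈ Set.Ico (0:ℝ) T, 0 < φ t)
    (hφ' : ∀ t ∈ Set.Ico (0:ℝ) T, HasDerivWithinAt φ (A t) (Set.Ico 0 T) t)
    (hA' : ∀ t ∈ Set.Ico (0:ℝ) T, HasDerivWithinAt A (A' t) (Set.Ico 0 T) t)
    (hbound : ∀ t ∈ Set.Ico (0:ℝ) T,
      A' t ≤ ((n : ℝ) - 1) / n * (A t) ^ 2 / φ t + n * φ t) :
    (∀ t ∈ Set.Ico (0:ℝ) T,
      derivWithin (derivWithin (fun s => φ s ^ ((1 : ℝ) / n)) (Set.Ico 0 T)) (Set.Ico 0 T) t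
        ≤ φ t ^ ((1 : ℝ) / n)) ∧
    (∀ t ∈ Set.Ico (0:ℝ) T,
      φ t ^ ((1 : ℝ) / n)
        ≤ φ 0 ^ ((1 : ℝ) / n) * Real.cosh t
          + (1 / n) * φ 0 ^ ((1 : ℝ) / n - 1) * A 0 * Real.sinh t) := by
  have hn0 : (0 : ℝ) < n := by norm_cast; omega
  set p : ℝ := 1 / n
  have hψ : ∀ t ∈ Ico (0 : ℝ) T,
      HasDerivWithinAt (fun s => φ s ^ p) (A t * p * φ t ^ (p - 1)) (Ico 0 T) t :=
    fun t ht => (hφ' t ht).rpow_const (Or.inl (hφpos t ht).ne')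
  have hψ' : ∀ t ∈ Ico (0 : ℝ) T, HasDerivWithinAt (fun s => A s * p * φ s ^ (p - 1))
      (A' t * p * φ t ^ (p - 1) + A t * p * (A t * (p - 1) * φ t ^ (p - 1 - 1))) (Ico 0 T) t :=
    fun t ht => ((hA' t ht).mul_const p).mul ((hφ' t ht).rpow_const (Or.inl (hφpos t ht).ne'))
  have hψ'' : ∀ t ∈ Ico (0 : ℝ) T,
      A' t * p * φ t ^ (p - 1) + A t * p * (A t * (p - 1) * φ t ^ (p - 1 - 1)) ≤ φ t ^ p :=
    fun t ht => rpow_inv_second_deriv_le hn0 (hφpos t ht) (hbound t ht)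
  refine ⟨fun t ht => ?_, fun t ht => ?_⟩
  · rw [derivWithin_derivWithin_of_hasDerivWithinAt (uniqueDiffOn_Ico 0 T) hψ hψ' ht]
    exact hψ'' t ht
  · have hcmp := le_cosh_sinh_of_hasDerivWithinAt_le_self hψ hψ' hψ'' ht
    rw [sub_zero] at hcmp
    linarith

theorem isoperimetric_type_hyperbolic (n : ℕ) (hn : 2 ≤ n) (T : ℝ)
    (φ A A' : ℝ → ℝ)
    (hφpos : ∀ t ∈ Set.Ico (0:ℝ) T, 0 < φ t)
    (hAnonneg : ∀ t ∈ Set.Ico (0:ℝ) T, 0 ≤ A t)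
    (hφ' : ∀ t ∈ Set.Ico (0:ℝ) T, HasDerivWithinAt φ (A t) (Set.Ico 0 T) t)
    (hA' : ∀ t ∈ Set.Ico (0:ℝ) T, HasDerivWithinAt A (A' t) (Set.Ico 0 T) t)
    (hA'cont : ContinuousOn A' (Set.Ico 0 T))
    (hbound : ∀ t ∈ Set.Ico (0:ℝ) T,
      A' t ≤ ((n : ℝ) - 1) / n * (A t) ^ 2 / φ t + n * φ t) :
    (∀ t ∈ Set.Ico (0:ℝ) T,
      derivWithin (derivWithin (fun s => φ s ^ ((1 : ℝ) / n)) (Set.Ico 0 T)) (Set.Ico 0 T) t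
        ≤ φ t ^ ((1 : ℝ) / n)) ∧
    (∀ t ∈ Set.Ico (0:ℝ) T,
      φ t ^ ((1 : ℝ) / n)
        ≤ φ 0 ^ ((1 : ℝ) / n) * Real.cosh t
          + (1 / n) * φ 0 ^ ((1 : ℝ) / n - 1) * A 0 * Real.sinh t) :=
  isoperimetric_type_hyperbolic_general n hn T φ A A' hφpos hφ' hA' hbound
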